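/- arXiv:1205.0708 — 2 statements merged into one kernel-verified Lean document; each statement's English description precedes it below -/
import Mathlib

section
/- For every s = {(a_1,μ_1), …, (a_p,μ_p)} ∈ 𝒮_r^{(n)}, the tuple ∂_{n,r}(s) = (Q_1, …, Q_n) is an n-tuple of polynomials with constant term 1 which is dominant, with ratio polynomials Q_i(v^{i−1}u)/Q_{i+1}(v^{i+1}u) = P_i(u) = ∏_{j: μ_j = i}(1 − a_j u) for 1 ≤ i ≤ n−1, and with ∑_{i=1}^{n} deg Q_i = r; in other words, ∂_{n,r}(s) ∈ 𝒬(n)_r, so ∂_{n,r} is a well-defined map 𝒮_r^{(n)} → 𝒬(n)_r. -/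
/-!
STATEMENT 3.  Fix `v ∈ ℂ*` not a root of unity and `n, r ≥ 1`.  For every
`s = {(a_1,μ_1),…,(a_p,μ_p)} ∈ 𝒮_r^{(n)}`, the tuple `∂_{n,r}(s) = (Q_1,…,Q_n)` consists of
polynomials with constant term `1`, is dominant with ratio polynomials
`Q_i(v^{i-1}u)/Q_{i+1}(v^{i+1}u) = P_i(u) = ∏_{j : μ_j = i} (1 - a_j u)` for `1 ≤ i ≤ n-1`,
and satisfies `∑_{i=1}^n deg Q_i = r`; i.e. `∂_{n,r}(s) ∈ 𝒬(n)_r`.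

Tuples are indexed `0`-based: the `1`-based index `j` corresponds to the Lean index `j - 1`.
-/

noncomputable section

/-- `sclP c q` is the polynomial `u ↦ q(c·u)`. -/
def sclP (c : ℂ) (q : Polynomial ℂ) : Polynomial ℂ := q.comp (Polynomial.C c * Polynomial.X)

/-- Extend a tuple of polynomials by `1` beyond its index range. -/
def extT {m : ℕ} (Q : Fin m → Polynomial ℂ) (k : ℕ) : Polynomial ℂ :=
  if h : k < m then Q ⟨k, h⟩ else 1

/-- `Q ∈ 𝒬(n)`: each `Q_j` has constant term `1` and each ratio
`Q_j(v^{j-1}u)/Q_{j+1}(v^{j+1}u)` is a polynomial (`0`-based: `j = m + 1`). -/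
def DominantT (v : ℂ) {n : ℕ} (Q : Fin n → Polynomial ℂ) : Prop :=
  (∀ i, (Q i).coeff 0 = 1) ∧
    ∀ m : ℕ, m + 1 < n → sclP (v ^ (m + 2)) (extT Q (m + 1)) ∣ sclP (v ^ m) (extT Q m)

/-- `𝒮_r^{(n)}`: multisets of segments `(a, k)` (center `a ∈ ℂ*`, length `k`) with all lengths
in `[1, n]` and total length `r`. -/
def SegSet (n r : ℕ) : Set (Multiset (ℂ × ℕ)) :=
  {s | (∀ q ∈ s, q.1 ≠ 0 ∧ 1 ≤ q.2 ∧ q.2 ≤ n) ∧ (s.map Prod.snd).sum = r}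

/-- `P_i(u) = ∏_{j : μ_j = i} (1 - a_j u)`. -/
def PsegP (s : Multiset (ℂ × ℕ)) (i : ℕ) : Polynomial ℂ :=
  ((s.filter (fun q => q.2 = i)).map
    (fun q => 1 - Polynomial.C q.1 * Polynomial.X)).prod

/-- `Q_n(u) = ∏_{i : μ_i = n} (1 - a_i v^{-n+1} u)`. -/
def QlastP (v : ℂ) (n : ℕ) (s : Multiset (ℂ × ℕ)) : Polynomial ℂ :=
  ((s.filter (fun q => q.2 = n)).map
    (fun q => 1 - Polynomial.C (q.1 * v ^ (1 - (n : ℤ))) * Polynomial.X)).prod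

/-- The map `∂_{n,r}` (with `0`-based index `i`, i.e. `1`-based index `i + 1`):
`Q_{i+1}(u) = ∏_{k=i+1}^{n-1} P_k(u v^{k - 2(i+1) + 1}) · Q_n(u v^{2(n-(i+1))})` (`k` 1-based);
in particular the last entry is `Q_n = QlastP` (the product is then empty, the scaling trivial). -/
def dsegMap (v : ℂ) (n : ℕ) (s : Multiset (ℂ × ℕ)) : Fin n → Polynomial ℂ :=
  fun i =>
    (∏ k ∈ Finset.Icc ((i : ℕ) + 1) (n - 1),
        sclP (v ^ ((k : ℤ) - 2 * ((i : ℕ) : ℤ) - 1)) (PsegP s k)) *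
      sclP (v ^ (2 * ((n : ℤ) - (((i : ℕ) : ℤ) + 1)))) (QlastP v n s)

/-- `𝒬(n)_r`: dominant `n`-tuples whose degrees sum to `r`. -/
def QSet (v : ℂ) (n r : ℕ) : Set (Fin n → Polynomial ℂ) :=
  {Q | DominantT v Q ∧ ∑ i ∈ Finset.range n, (extT Q i).natDegree = r}

/-!
Each `Q_i` is a product of factors `1 - c u` with `c ≠ 0`, so it has constant term `1` and its
degree is the number of segments of length `≥ i`. Rescaling `u ↦ v^{i-1} u` turns the first factor
`P_i(u v^{-i+1})` of `Q_i` into `P_i` and the remaining ones into `Q_{i+1}(v^{i+1} u)`, which gives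
dominance with ratio `P_i`. In `∑ deg Q_i` a segment of length `μ` is counted once for each
`i ≤ μ`, so the total is `∑ μ_j = r`.
-/

open Polynomial Finset

section LinearFactors

variable {R ι : Type*} [CommRing R] (t : Multiset ι) (f : ι → R)

lemma ne_zero_of_coeff_zero_eq_one [Nontrivial R] {p : R[X]} (h : p.coeff 0 = 1) : p ≠ 0 := by
  rintro rfl
  simp at h

lemma coeff_zero_prod_one_sub_C_mul_X :
    ((t.map fun i => 1 - C (f i) * X).prod).coeff 0 = 1 := by
  simp [coeff_zero_multiset_prod, Multiset.map_map]

lemma natDegree_prod_one_sub_C_mul_X [IsDomain R] (hf : ∀ i ∈ t, f i ≠ 0) :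
    ((t.map fun i => 1 - C (f i) * X).prod).natDegree = Multiset.card t := by
  have hfactor : ∀ i ∈ t, (1 - C (f i) * X).natDegree = 1 := fun i hi => by
    rw [sub_eq_neg_add, ← neg_mul, ← C_neg, ← C_1]
    exact natDegree_linear (neg_ne_zero.mpr (hf i hi))
  rw [natDegree_multiset_prod _ fun h0 => ?_, Multiset.map_map, Function.comp_def,
    Multiset.map_congr rfl hfactor, Multiset.map_const', Multiset.sum_replicate, smul_eq_mul,
    mul_one]
  obtain ⟨i, -, hi⟩ := Multiset.mem_map.mp h0
  simpa using congrArg (coeff · 0) hi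

end LinearFactors

section Scaling

variable (c : ℂ) (p q : ℂ[X])

lemma sclP_one : sclP 1 q = q := by simp [sclP]

lemma sclP_mul : sclP c (p * q) = sclP c p * sclP c q := mul_comp p q _

lemma sclP_prod {ι : Type*} (t : Finset ι) (f : ι → ℂ[X]) :
    sclP c (∏ k ∈ t, f k) = ∏ k ∈ t, sclP c (f k) := prod_comp t f _

lemma sclP_sclP (d : ℂ) : sclP c (sclP d q) = sclP (c * d) q := by
  simp only [sclP, comp_assoc, mul_comp, C_comp, X_comp, ← mul_assoc, ← C_mul, mul_comm d]

lemma sclP_zpow_sclP_zpow {v : ℂ} (hv : v ≠ 0) (a b : ℤ) :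
    sclP (v ^ a) (sclP (v ^ b) q) = sclP (v ^ (a + b)) q := by
  rw [sclP_sclP, zpow_add₀ hv]

lemma coeff_zero_sclP : (sclP c q).coeff 0 = q.coeff 0 := by
  simp [sclP, coeff_zero_eq_eval_zero, eval_comp]

lemma natDegree_sclP {d : ℂ} (hd : d ≠ 0) : (sclP d q).natDegree = q.natDegree := by
  simp [sclP, natDegree_comp, natDegree_C_mul_X _ hd]

end Scaling

section SegmentPolynomials

variable (v : ℂ) (n : ℕ) (s : Multiset (ℂ × ℕ))

lemma coeff_zero_PsegP (i : ℕ) : (PsegP s i).coeff 0 = 1 :=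
  coeff_zero_prod_one_sub_C_mul_X _ Prod.fst

lemma coeff_zero_QlastP : (QlastP v n s).coeff 0 = 1 :=
  coeff_zero_prod_one_sub_C_mul_X _ _

lemma natDegree_PsegP (hs : ∀ q ∈ s, q.1 ≠ 0) (i : ℕ) :
    (PsegP s i).natDegree = Multiset.card (s.filter (·.2 = i)) :=
  natDegree_prod_one_sub_C_mul_X _ Prod.fst fun q hq => hs q (Multiset.mem_of_mem_filter hq)

lemma natDegree_QlastP (hv : v ≠ 0) (hs : ∀ q ∈ s, q.1 ≠ 0) :
    (QlastP v n s).natDegree = Multiset.card (s.filter (·.2 = n)) :=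
  natDegree_prod_one_sub_C_mul_X _ _ fun q hq =>
    mul_ne_zero (hs q (Multiset.mem_of_mem_filter hq)) (zpow_ne_zero _ hv)

lemma coeff_zero_dsegMap (i : Fin n) : (dsegMap v n s i).coeff 0 = 1 := by
  simp [dsegMap, mul_coeff_zero, coeff_zero_prod, coeff_zero_sclP, coeff_zero_PsegP,
    coeff_zero_QlastP]

lemma natDegree_dsegMap (hv : v ≠ 0) (hs : ∀ q ∈ s, q.1 ≠ 0) (i : Fin n) :
    (dsegMap v n s i).natDegree =
      ∑ k ∈ Icc ((i : ℕ) + 1) n, Multiset.card (s.filter (·.2 = k)) := by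
  have hne : ∀ (c : ℂ) (p : ℂ[X]), p.coeff 0 = 1 → sclP c p ≠ 0 := fun c p hp =>
    ne_zero_of_coeff_zero_eq_one ((coeff_zero_sclP c p).trans hp)
  obtain ⟨m, rfl⟩ : ∃ m, n = m + 1 := ⟨n - 1, by have := i.isLt; omega⟩
  rw [dsegMap, natDegree_mul (prod_ne_zero_iff.mpr fun k _ => hne _ _ (coeff_zero_PsegP s k))
      (hne _ _ (coeff_zero_QlastP v _ s)),
    natDegree_prod _ _ fun k _ => hne _ _ (coeff_zero_PsegP s k),
    natDegree_sclP _ (zpow_ne_zero _ hv), natDegree_QlastP v _ s hv hs,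
    sum_Icc_succ_top (by omega), Nat.add_sub_cancel]
  congr 1
  exact sum_congr rfl fun k _ => by rw [natDegree_sclP _ (zpow_ne_zero _ hv), natDegree_PsegP s hs]

lemma extT_dsegMap {m : ℕ} (hm : m < n) : extT (dsegMap v n s) m = dsegMap v n s ⟨m, hm⟩ :=
  dif_pos hm

/-- Under `u ↦ v^m u` the first factor of `Q_{m+1}` becomes `P_{m+1}` itself, and each remaining
factor becomes the corresponding factor of `Q_{m+2}` under `u ↦ v^{m+2} u`. -/
lemma dsegMap_ratio (hv : v ≠ 0) {m : ℕ} (hm : m + 1 < n) :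
    sclP (v ^ m) (extT (dsegMap v n s) m) =
      PsegP s (m + 1) * sclP (v ^ (m + 2)) (extT (dsegMap v n s) (m + 1)) := by
  rw [extT_dsegMap v n s (by omega), extT_dsegMap v n s hm]
  simp only [dsegMap, sclP_mul, sclP_prod, ← zpow_natCast, sclP_zpow_sclP_zpow _ hv]
  have hIcc : Icc (m + 1) (n - 1) = insert (m + 1) (Icc (m + 1 + 1) (n - 1)) := by
    ext k; simp only [mem_Icc, mem_insert]; omega
  have hfirst : (m : ℤ) + (((m + 1 : ℕ) : ℤ) - 2 * m - 1) = 0 := by push_cast; ring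
  have hmiddle (k : ℕ) :
      (m : ℤ) + (k - 2 * m - 1) = ((m + 2 : ℕ) : ℤ) + (k - 2 * ((m + 1 : ℕ) : ℤ) - 1) := by
    push_cast; ring
  have hlast :
      (m : ℤ) + 2 * (n - (m + 1)) = ((m + 2 : ℕ) : ℤ) + 2 * (n - (((m + 1 : ℕ) : ℤ) + 1)) := by
    push_cast; ring
  rw [hIcc, prod_insert (by simp), mul_assoc, hfirst, zpow_zero, sclP_one, hlast]
  simp only [hmiddle]

end SegmentPolynomials

lemma sum_range_sum_Icc_eq {M : Type*} [AddCommMonoid M] (n : ℕ) (c : ℕ → M) :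
    ∑ i ∈ range n, ∑ k ∈ Icc (i + 1) n, c k = ∑ k ∈ range (n + 1), k • c k := by
  rw [sum_comm' (t' := range (n + 1)) (s' := range) fun i k => by
    simp only [mem_range, mem_Icc]; omega]
  simp

lemma sum_range_mul_card_filter_snd {α : Type*} (n : ℕ) (s : Multiset (α × ℕ))
    (hs : ∀ q ∈ s, q.2 ≤ n) :
    ∑ k ∈ range (n + 1), k * Multiset.card (s.filter (·.2 = k)) = (s.map Prod.snd).sum := by
  classical
  rw [sum_multiset_count_of_subset _ (range (n + 1)) fun k hk => ?_]
  · refine sum_congr rfl fun k _ => ?_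
    rw [Multiset.count_map, smul_eq_mul, mul_comm]
    simp_rw [eq_comm]
  · obtain ⟨q, hq, rfl⟩ := Multiset.mem_map.mp (Multiset.mem_toFinset.mp hk)
    exact mem_range.mpr (Nat.lt_succ_of_le (hs q hq))

theorem statement3_general (v : ℂ) (hv : v ≠ 0)
    (n r : ℕ)
    (s : Multiset (ℂ × ℕ)) (hs : s ∈ SegSet n r) :
    DominantT v (dsegMap v n s) ∧
      (∀ m : ℕ, m + 1 < n →
        sclP (v ^ m) (extT (dsegMap v n s) m) =
          PsegP s (m + 1) * sclP (v ^ (m + 2)) (extT (dsegMap v n s) (m + 1))) ∧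
      dsegMap v n s ∈ QSet v n r := by
  obtain ⟨hmem, hsum⟩ := hs
  have hratio := fun m (hm : m + 1 < n) => dsegMap_ratio v n s hv hm
  have hdom : DominantT v (dsegMap v n s) :=
    ⟨coeff_zero_dsegMap v n s, fun m hm => ⟨PsegP s (m + 1), by rw [hratio m hm, mul_comm]⟩⟩
  refine ⟨hdom, hratio, hdom, ?_⟩
  calc ∑ i ∈ range n, (extT (dsegMap v n s) i).natDegree
      = ∑ i ∈ range n, ∑ k ∈ Icc (i + 1) n, Multiset.card (s.filter (·.2 = k)) :=
        sum_congr rfl fun i hi => by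
          rw [extT_dsegMap v n s (mem_range.mp hi),
            natDegree_dsegMap v n s hv fun q hq => (hmem q hq).1]
    _ = (s.map Prod.snd).sum := by
        simp only [sum_range_sum_Icc_eq, smul_eq_mul]
        exact sum_range_mul_card_filter_snd n s fun q hq => (hmem q hq).2.2
    _ = r := hsum

theorem statement3 (v : ℂ) (hv : v ≠ 0) (hroot : ∀ k : ℕ, 0 < k → v ^ k ≠ 1)
    (n r : ℕ) (hn : 1 ≤ n) (hr : 1 ≤ r)
    (s : Multiset (ℂ × ℕ)) (hs : s ∈ SegSet n r) :
    DominantT v (dsegMap v n s) ∧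
      (∀ m : ℕ, m + 1 < n →
        sclP (v ^ m) (extT (dsegMap v n s) m) =
          PsegP s (m + 1) * sclP (v ^ (m + 2)) (extT (dsegMap v n s) (m + 1))) ∧
      dsegMap v n s ∈ QSet v n r :=
  statement3_general v hv n r s hs

end
end

section
/- Let μ = (μ_1, …, μ_p) be a composition of r. Then, under the canonical identification Ω_{n,ℂ}^{⊗r} = Ω_{n,ℂ}^{⊗μ_1} ⊗ ⋯ ⊗ Ω_{n,ℂ}^{⊗μ_p}, there is an equality of ℂ-subspaces Ω_{n,ℂ}^{⊗r}·𝒥_μ = (Ω_{n,ℂ}^{⊗μ_1}·𝒥_{μ,1}) ⊗ ⋯ ⊗ (Ω_{n,ℂ}^{⊗μ_p}·𝒥_{μ,p}), where Ω_{n,ℂ}^{⊗r}·𝒥_μ denotes the ℂ-span of all vectors w·h with w ∈ Ω_{n,ℂ}^{⊗r} and h ∈ 𝒥_μ, and Ω_{n,ℂ}^{⊗μ_j}·𝒥_{μ,j} denotes the ℂ-span of all w·h with w ∈ Ω_{n,ℂ}^{⊗μ_j} and h ∈ 𝒥_{μ,j} acting on the j-th tensor factor. -/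
/-!
STATEMENT 7.  Fix `v ∈ ℂ*` not a root of unity, `n, r ≥ 1`, and a composition
`μ = (μ_1,…,μ_p)` of `r`.  Then, under the canonical identification
`Ω_{n,ℂ}^{⊗r} = Ω_{n,ℂ}^{⊗μ_1} ⊗ ⋯ ⊗ Ω_{n,ℂ}^{⊗μ_p}`, one has the equality of `ℂ`-subspaces
`Ω_{n,ℂ}^{⊗r}·𝒥_μ = (Ω_{n,ℂ}^{⊗μ_1}·𝒥_{μ,1}) ⊗ ⋯ ⊗ (Ω_{n,ℂ}^{⊗μ_p}·𝒥_{μ,p})`.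

Formalization choices:
* The tensor space `Ω_{n,ℂ}^{⊗m}` is modelled concretely as the function space
  `(Fin m → Fin n) → ℂ`, whose standard basis `eb 𝐢` corresponds to the basis
  `ω_{i_1} ⊗ ⋯ ⊗ ω_{i_m}` of the `m`-fold tensor power of `Ω_{n,ℂ}`.  Under the canonical
  identification, the pure tensor `g_1 ⊗ ⋯ ⊗ g_p` (with `g_j ∈ Ω_{n,ℂ}^{⊗μ_j}`) corresponds to
  the function `𝐢 ↦ ∏_j g_j (𝐢|_{block j})`; the tensor product of the subspaces `W_j` is the
  span of these pure tensors with `g_j ∈ W_j`.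
* The Iwahori–Hecke algebra `ℋ(r)_ℂ` is encoded as an arbitrary `ℂ`-algebra `H` together with
  elements `T k` (`k = 0,…,r-2`, so `T k` is the generator `T_{k+1}`) satisfying the Hecke
  relations, generating `H`, and with the universal (initial) property among all such; this
  characterizes `ℋ(r)_ℂ` up to isomorphism.
* The right `ℋ(r)_ℂ`-module structure on the tensor space, and the right action of the
  subalgebra `ℋ_{μ,j}` on the `j`-th tensor factor, are encoded by maps `act`/`actB j`
  satisfying the right-module axioms and the defining formulas on basis vectors
  (`0`-based positions: `T k` acts on positions `k, k+1`).
-/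

noncomputable section

/-- The standard basis vector `ω_{i_1} ⊗ ⋯ ⊗ ω_{i_m}` of the tensor space
`Ω_{n,ℂ}^{⊗m} = (Fin m → Fin n) → ℂ`. -/
def eb {m n : ℕ} (i : Fin m → Fin n) : (Fin m → Fin n) → ℂ :=
  fun j => if j = i then 1 else 0

/-- The offset (0-based starting position) of the `j`-th block of the composition `μ`. -/
def off {p : ℕ} (μ : Fin p → ℕ) (j : Fin p) : ℕ :=
  ∑ l ∈ Finset.univ.filter (fun l => l < j), μ l

/-- `inBlock μ j k` says that positions `k, k+1` (0-based) both lie in the `j`-th block of `μ`,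
i.e. that the simple transposition `s_{k+1}` lies in `𝔖_{μ^{(j)}}`. -/
def inBlock {p : ℕ} (μ : Fin p → ℕ) (j : Fin p) (k : ℕ) : Prop :=
  off μ j ≤ k ∧ k + 2 ≤ off μ j + μ j

/-- The `j`-th block of a multi-index `i : Fin r → Fin n` under the canonical identification
`Ω^{⊗r} = Ω^{⊗μ_1} ⊗ ⋯ ⊗ Ω^{⊗μ_p}`. -/
def blockOf {p r n : ℕ} (μ : Fin p → ℕ) (hsum : ∑ j, μ j = r) (i : Fin r → Fin n)
    (j : Fin p) : Fin (μ j) → Fin n :=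
  fun t => i ⟨off μ j + t.1, by
    have ht := t.isLt
    have h1 : off μ j + μ j ≤ ∑ l, μ l := by
      have hj : j ∉ Finset.univ.filter (fun l => l < j) := by simp
      have h2 : ∑ l ∈ insert j (Finset.univ.filter (fun l => l < j)), μ l
          = μ j + off μ j := Finset.sum_insert hj
      have h3 : ∑ l ∈ insert j (Finset.univ.filter (fun l => l < j)), μ l ≤ ∑ l, μ l :=
        Finset.sum_le_sum_of_subset (Finset.subset_univ _)
      omega
    omega⟩

/-- The element `C_k = v⁻¹ T_k − v · 1` of the Hecke algebra (0-based `k`). -/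
def heckeC (v : ℂ) {H : Type} [Ring H] [Algebra ℂ H] (T : ℕ → H) (k : ℕ) : H :=
  v⁻¹ • T k - v • (1 : H)

/-- The subalgebra `ℋ_{μ,j}` of the Hecke algebra, generated by the `T_k` with both positions
`k, k+1` in the `j`-th block of `μ`. -/
def blockAlg {p : ℕ} (μ : Fin p → ℕ) {H : Type} [Ring H] [Algebra ℂ H] (T : ℕ → H)
    (j : Fin p) : Subalgebra ℂ H :=
  Algebra.adjoin ℂ {x : H | ∃ k, inBlock μ j k ∧ x = T k}

/-- The left ideal `𝒥_μ = ⋂_{i : s_i ∈ 𝔖_μ} ℋ(r)_ℂ C_i`. -/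
def bigJ (v : ℂ) {p : ℕ} (μ : Fin p → ℕ) {H : Type} [Ring H] [Algebra ℂ H]
    (T : ℕ → H) : Set H :=
  {x | ∀ k : ℕ, (∃ j, inBlock μ j k) → ∃ h : H, x = h * heckeC v T k}

/-- The left ideal `𝒥_{μ,j} = ⋂_{i : s_i ∈ 𝔖_{μ^{(j)}}} ℋ_{μ,j} C_i` of `ℋ_{μ,j}` (realized as a
subset of `H`; an empty intersection is all of `ℋ_{μ,j}`). -/
def smallJ (v : ℂ) {p : ℕ} (μ : Fin p → ℕ) {H : Type} [Ring H] [Algebra ℂ H]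
    (T : ℕ → H) (j : Fin p) : Set H :=
  {x | x ∈ blockAlg μ T j ∧
    ∀ k : ℕ, inBlock μ j k → ∃ h ∈ blockAlg μ T j, x = h * heckeC v T k}

/-!
Let `y_j ∈ ℋ_{μ,j}` be the `q`-antisymmetrizer of the `j`-th block of `μ` and `y_μ = y_1 ⋯ y_p`
(the `y_j` commute). Since `y_j T_k = -y_j` for the `T_k` of the block, `y_j` is a multiple of
`y_j C_k`, so `y_j ∈ 𝒥_{μ,j}` and `y_μ ∈ 𝒥_μ`. Conversely `C_k T_k = -C_k`, so every vector of
`Ω^{⊗r}·𝒥_μ` (or of `Ω^{⊗μ_j}·𝒥_{μ,j}`) is a `(-1)`-eigenvector of these `T_k`, and on such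
vectors `y_j` acts by the `v⁻²`-factorial `[μ_j]!`, which is nonzero because `v` is not a root of
unity. Hence both sides are `Ω^{⊗r}·y_μ`; for the right-hand side this uses that `ℋ_{μ,j}` acts on
`g_1 ⊗ ⋯ ⊗ g_p` through the `j`-th factor only, so `ω_𝐢·y_μ = (ω_{𝐢_1}·y_1) ⊗ ⋯ ⊗ (ω_{𝐢_p}·y_p)`.
-/

namespace HeckeTensorBlocks

section Blocks

variable {p r n : ℕ} (μ : Fin p → ℕ) (hsum : ∑ j, μ j = r)

lemma coe_finSigmaFinEquiv (j : Fin p) (t : Fin (μ j)) :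
    (finSigmaFinEquiv ⟨j, t⟩ : ℕ) = off μ j + t := by
  rw [finSigmaFinEquiv_apply, off, Finset.filter_gt_eq_Iio]
  congr 1
  exact Finset.sum_bij' (fun i _ => Fin.castLE j.2.le i)
    (fun l hl => ⟨l, Fin.lt_def.mp (Finset.mem_Iio.mp hl)⟩) (by simp [Fin.lt_def]) (by simp)
    (by simp) (by simp) (by simp)

def blockPos : (Σ j, Fin (μ j)) ≃ Fin r :=
  finSigmaFinEquiv.trans (finCongr hsum)

lemma coe_blockPos (j : Fin p) (t : Fin (μ j)) :
    (blockPos μ hsum ⟨j, t⟩ : ℕ) = off μ j + t :=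
  coe_finSigmaFinEquiv μ j t

lemma blockOf_apply (i : Fin r → Fin n) (j : Fin p) (t : Fin (μ j)) :
    blockOf μ hsum i j t = i (blockPos μ hsum ⟨j, t⟩) :=
  congrArg i (Fin.ext (coe_blockPos μ hsum j t).symm)

lemma blockOf_injective : Function.Injective (fun (i : Fin r → Fin n) j => blockOf μ hsum i j) := by
  intro i i' h
  funext s
  obtain ⟨⟨j, t⟩, rfl⟩ := (blockPos μ hsum).surjective s
  simpa only [blockOf_apply] using congrFun (congrFun h j) t

lemma eq_of_mem_block {j j' : Fin p} {s : ℕ} (h : off μ j ≤ s ∧ s < off μ j + μ j)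
    (h' : off μ j' ≤ s ∧ s < off μ j' + μ j') : j = j' := by
  have key := (finSigmaFinEquiv (n := μ)).injective (a₁ := ⟨j, ⟨s - off μ j, by omega⟩⟩)
    (a₂ := ⟨j', ⟨s - off μ j', by omega⟩⟩) (Fin.ext (by simp only [coe_finSigmaFinEquiv]; omega))
  exact congrArg Sigma.fst key

include hsum in
lemma off_add_le (j : Fin p) : off μ j + μ j ≤ r :=
  calc off μ j + μ j = ∑ l ∈ insert j (Finset.Iio j), μ l := by
        rw [Finset.sum_insert (by simp), add_comm, off, Finset.filter_gt_eq_Iio]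
    _ ≤ r := hsum ▸ Finset.sum_le_sum_of_subset (Finset.subset_univ _)

include hsum in
lemma inBlock_succ_lt {j : Fin p} {k : ℕ} (hk : inBlock μ j k) : k + 1 < r := by
  have := off_add_le μ hsum j
  obtain ⟨_, _⟩ := hk
  omega

lemma inBlock_separated {j j' : Fin p} {k k' : ℕ} (hk : inBlock μ j k) (hk' : inBlock μ j' k')
    (hne : j ≠ j') : k + 1 < k' ∨ k' + 1 < k := by
  obtain ⟨h1, h2⟩ := hk
  obtain ⟨h1', h2'⟩ := hk'
  by_contra! hc
  obtain ⟨s, hs, hs'⟩ : ∃ s, (off μ j ≤ s ∧ s < off μ j + μ j) ∧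
      (off μ j' ≤ s ∧ s < off μ j' + μ j') :=
    if hkk : k ≤ k' then ⟨k', by omega, by omega⟩ else ⟨k, by omega, by omega⟩
  exact hne (eq_of_mem_block μ hs hs')

lemma blockOf_comp_swap_of_ne {j₀ j : Fin p} {k : ℕ} (hk : inBlock μ j₀ k) (hne : j ≠ j₀)
    (hkr : k + 1 < r) (i : Fin r → Fin n) :
    blockOf μ hsum (i ∘ Equiv.swap ⟨k, by omega⟩ ⟨k + 1, hkr⟩) j = blockOf μ hsum i j := by
  obtain ⟨h1, h2⟩ := hk
  funext t
  have ht := t.isLt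
  simp only [blockOf_apply, Function.comp_apply]
  congr 1
  have hpos := coe_blockPos μ hsum j t
  apply Equiv.swap_apply_of_ne_of_ne <;> intro h <;> simp only [Fin.ext_iff, hpos] at h <;>
    exact hne (eq_of_mem_block μ (s := off μ j + t) ⟨by omega, by omega⟩ ⟨by omega, by omega⟩)

lemma blockOf_comp_swap_self {j₀ : Fin p} {k : ℕ} (hk : inBlock μ j₀ k) (hkr : k + 1 < r)
    (i : Fin r → Fin n) :
    blockOf μ hsum (i ∘ Equiv.swap ⟨k, by omega⟩ ⟨k + 1, hkr⟩) j₀ =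
      blockOf μ hsum i j₀ ∘ Equiv.swap ⟨k - off μ j₀, by obtain ⟨_, _⟩ := hk; omega⟩
        ⟨k - off μ j₀ + 1, by obtain ⟨_, _⟩ := hk; omega⟩ := by
  obtain ⟨h1, h2⟩ := hk
  funext t
  simp only [blockOf_apply, Function.comp_apply]
  congr 1
  apply Fin.ext
  simp only [Equiv.swap_apply_def, Fin.ext_iff, apply_ite Fin.val, coe_blockPos]
  split_ifs <;> omega

end Blocks

section HeckeOp

variable {m n : ℕ}

lemma eb_apply (c i : Fin m → Fin n) : eb c i = if i = c then 1 else 0 := rfl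

lemma eb_eq_single (c : Fin m → Fin n) : eb c = Pi.single c 1 := by
  ext i
  simp [eb, Pi.single_apply]

def heckeOp (v : ℂ) (a b : Fin m) :
    ((Fin m → Fin n) → ℂ) →ₗ[ℂ] ((Fin m → Fin n) → ℂ) where
  toFun x i :=
    if i a = i b then v ^ 2 * x i
    else if i a < i b then v * x (i ∘ Equiv.swap a b)
    else v * x (i ∘ Equiv.swap a b) + (v ^ 2 - 1) * x i
  map_add' x y := by
    funext i
    simp only [Pi.add_apply]
    split_ifs <;> ring
  map_smul' c x := by
    funext i
    simp only [Pi.smul_apply, smul_eq_mul, RingHom.id_apply]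
    split_ifs <;> ring

variable (v : ℂ) {a b : Fin m}

lemma heckeOp_apply (x : (Fin m → Fin n) → ℂ) (i : Fin m → Fin n) :
    heckeOp v a b x i =
      if i a = i b then v ^ 2 * x i
      else if i a < i b then v * x (i ∘ Equiv.swap a b)
      else v * x (i ∘ Equiv.swap a b) + (v ^ 2 - 1) * x i := rfl

lemma comp_swap_eq_iff {i c : Fin m → Fin n} :
    i ∘ Equiv.swap a b = c ↔ i = c ∘ Equiv.swap a b := by
  constructor <;> rintro rfl <;> funext x <;> simp

lemma comp_swap_eq_self_iff {i : Fin m → Fin n} :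
    i ∘ Equiv.swap a b = i ↔ i a = i b := by
  constructor
  · intro h
    simpa using (congrFun h a).symm
  · intro h
    funext x
    simp only [Function.comp_apply, Equiv.swap_apply_def]
    split_ifs with h1 h2
    · rw [h1, h]
    · rw [h2, h]
    · rfl

lemma heckeOp_eb (c : Fin m → Fin n) :
    heckeOp v a b (eb c) =
      if c a = c b then (v ^ 2 : ℂ) • eb c
      else if c a < c b then v • eb (c ∘ Equiv.swap a b)
      else v • eb (c ∘ Equiv.swap a b) + (v ^ 2 - 1 : ℂ) • eb c := by
  funext i
  simp only [heckeOp_apply, ite_apply, Pi.add_apply, Pi.smul_apply, smul_eq_mul, eb_apply,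
    comp_swap_eq_iff]
  rcases eq_or_ne i c with rfl | hic
  · have hs : i = i ∘ Equiv.swap a b ↔ i a = i b := by
      rw [eq_comm, comp_swap_eq_self_iff]
    rcases lt_trichotomy (i a) (i b) with h | h | h
    · simp [h, h.ne, hs]
    · simp [h]
    · simp [h.ne', h.not_gt, hs]
  rcases eq_or_ne i (c ∘ Equiv.swap a b) with rfl | hic'
  · have hne : c a ≠ c b := fun h => hic ((comp_swap_eq_self_iff).mpr h)
    rcases lt_or_gt_of_ne hne with h | h
    all_goals simp [hic, hne, hne.symm, h, h.not_gt]
  · simp [hic, hic']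

end HeckeOp

section HeckeAlgebra

variable {H : Type} [Ring H]

def descProd (T : ℕ → H) (a : ℕ) : ℕ → H
  | 0 => 1
  | s + 1 => descProd T a s * T (a - s)

lemma descProd_add (T : ℕ → H) (a x y : ℕ) :
    descProd T a (x + y) = descProd T a x * descProd T (a - x) y := by
  induction y with
  | zero => simp [descProd]
  | succ y ih => rw [← add_assoc, descProd, ih, descProd, Nat.sub_sub, mul_assoc]

variable [Algebra ℂ H]

/-- Signed sum over the distinguished coset representatives `s_{o+t-1} ⋯ s_{o+t-s}` of `𝔖_t`
in `𝔖_{t+1}`. -/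
def cosetSum (v : ℂ) (T : ℕ → H) (o t : ℕ) : H :=
  ∑ s ∈ Finset.range (t + 1), (-(v ^ 2)⁻¹) ^ s • descProd T (o + t - 1) s

/-- The `q`-antisymmetrizer `∑_{w ∈ 𝔖_m} (-v⁻²)^{ℓ(w)} T_w` of the positions `o, …, o + m - 1`,
factored along `𝔖_1 ⊂ 𝔖_2 ⊂ ⋯ ⊂ 𝔖_m`. -/
def antisym (v : ℂ) (T : ℕ → H) (o : ℕ) : ℕ → H
  | 0 => 1
  | t + 1 => antisym v T o t * cosetSum v T o t

structure IsHeckeFamily (v : ℂ) (r : ℕ) (T : ℕ → H) : Prop where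
  quadratic : ∀ k : ℕ, k + 1 < r → (T k + 1) * (T k - algebraMap ℂ H (v ^ 2)) = 0
  braid : ∀ k : ℕ, k + 2 < r → T k * T (k + 1) * T k = T (k + 1) * T k * T (k + 1)
  comm : ∀ k l : ℕ, k + 1 < r → l + 1 < r → k + 1 < l → T k * T l = T l * T k

namespace IsHeckeFamily

variable {v : ℂ} {r : ℕ} {T : ℕ → H} (hT : IsHeckeFamily v r T)
include hT

lemma T_mul_T {k : ℕ} (hk : k + 1 < r) :
    T k * T k = (v ^ 2 - 1 : ℂ) • T k + (v ^ 2 : ℂ) • (1 : H) := by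
  have h := hT.quadratic k hk
  rw [Algebra.algebraMap_eq_smul_one] at h
  rw [← sub_eq_zero, ← h]
  simp only [add_mul, mul_sub, one_mul, mul_smul_comm, mul_one]
  module

lemma heckeC_mul_T (hv : v ≠ 0) {k : ℕ} (hk : k + 1 < r) :
    heckeC v T k * T k = -heckeC v T k := by
  rw [heckeC, sub_mul, smul_mul_assoc, hT.T_mul_T hk, smul_mul_assoc, one_mul, smul_add,
    smul_smul, smul_smul]
  have : v⁻¹ * (v ^ 2 - 1) = v - v⁻¹ := by field_simp
  rw [this, show v⁻¹ * v ^ 2 = v by field_simp]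
  module

lemma T_mul_descProd_of_lt {a s k : ℕ} (ha : a + 1 < r) (h : k + s + 1 ≤ a) :
    T k * descProd T a s = descProd T a s * T k := by
  induction s with
  | zero => simp [descProd]
  | succ s ih =>
    rw [descProd, ← mul_assoc, ih (by omega), mul_assoc, mul_assoc,
      hT.comm k (a - s) (by omega) (by omega) (by omega)]

lemma T_mul_descProd_of_gt {a s k : ℕ} (hk : k + 1 < r) (h : a + 2 ≤ k) :
    T k * descProd T a s = descProd T a s * T k := by
  induction s with
  | zero => simp [descProd]
  | succ s ih =>
    rw [descProd, ← mul_assoc, ih, mul_assoc, mul_assoc,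
      (hT.comm (a - s) k (by omega) hk (by omega)).symm]

lemma descProd_succ_mul_T_add_one {a u : ℕ} (ha : a + 1 < r) (hu : u ≤ a) :
    descProd T a (u + 1) * (T (a - u) + 1) = (v ^ 2 : ℂ) • (descProd T a u * (T (a - u) + 1)) := by
  rw [descProd, mul_add, mul_one, mul_assoc, hT.T_mul_T (by omega)]
  simp only [mul_add, mul_smul_comm, mul_one, smul_add]
  module

lemma descProd_mul_T_of_ge {a s k : ℕ} (ha : a + 1 < r) (hk : 1 ≤ k) (hka : k ≤ a)
    (hs1 : a - k + 2 ≤ s) (hs2 : s ≤ a + 1) :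
    descProd T a s * T k = T (k - 1) * descProd T a s := by
  obtain ⟨y, rfl⟩ : ∃ y, s = (a - k) + (2 + y) := ⟨s - (a - k + 2), by omega⟩
  have hsplit : descProd T a ((a - k) + (2 + y)) =
      descProd T a (a - k) * (T k * T (k - 1) * descProd T (k - 2) y) := by
    rw [descProd_add, show a - (a - k) = k by omega, descProd_add]
    simp [descProd]
  have hE : descProd T (k - 2) y * T k = T k * descProd T (k - 2) y := by
    rcases Nat.eq_zero_or_pos y with rfl | hy
    · simp [descProd]
    · exact (hT.T_mul_descProd_of_gt (by omega) (by omega)).symm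
  have hP : T (k - 1) * descProd T a (a - k) = descProd T a (a - k) * T (k - 1) :=
    hT.T_mul_descProd_of_lt ha (by omega)
  have hbraid : T (k - 1) * T k * T (k - 1) = T k * T (k - 1) * T k := by
    have := hT.braid (k - 1) (by omega)
    rwa [show k - 1 + 1 = k by omega] at this
  set P := descProd T a (a - k)
  set E := descProd T (k - 2) y
  rw [hsplit]
  calc P * (T k * T (k - 1) * E) * T k = P * (T k * T (k - 1) * T k) * E := by
        simp only [mul_assoc, hE]
    _ = P * T (k - 1) * (T k * T (k - 1) * E) := by
        rw [← hbraid]; simp only [mul_assoc]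
    _ = T (k - 1) * (P * (T k * T (k - 1) * E)) := by rw [← hP, mul_assoc]

lemma mul_cosetSum_mul_T_add_one (hv : v ≠ 0) {o t : ℕ} (hot : o + t < r) {y : H}
    (hy : ∀ k, o ≤ k → k + 2 ≤ o + t → y * (T k + 1) = 0) {k : ℕ} (hk1 : o ≤ k)
    (hk2 : k + 1 ≤ o + t) :
    y * cosetSum v T o t * (T k + 1) = 0 := by
  -- With `u = a - k`, the terms `s < u` commute with `T_k + 1`, the terms `s > u + 1` turn it
  -- into `T_{k-1} + 1` (braid relation), and the terms `s = u, u + 1` cancel each other.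
  set a := o + t - 1
  set u := a - k
  have hka : k = a - u := by omega
  have hterm : ∀ s, y * ((-(v ^ 2)⁻¹) ^ s • descProd T a s) * (T k + 1) =
      (-(v ^ 2)⁻¹) ^ s • (y * (descProd T a s * (T k + 1))) := fun s => by
    rw [mul_smul_comm, smul_mul_assoc, mul_assoc]
  rw [cosetSum, Finset.mul_sum, Finset.sum_mul, Finset.sum_congr rfl fun s _ => hterm s,
    Finset.sum_eq_add_of_mem u (u + 1) (by simp; omega) (by simp; omega) (by omega)]
  · have hc : (-(v ^ 2)⁻¹) ^ u + (-(v ^ 2)⁻¹) ^ (u + 1) * v ^ 2 = 0 := by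
      rw [pow_succ (-(v ^ 2)⁻¹) u, mul_assoc, neg_mul, inv_mul_cancel₀ (pow_ne_zero 2 hv)]
      ring
    rw [hka, hT.descProd_succ_mul_T_add_one (by omega) (by omega), mul_smul_comm, smul_smul,
      ← add_smul, hc, zero_smul]
  · intro s hs ⟨hsu, hsu1⟩
    rw [Finset.mem_range] at hs
    rcases lt_or_gt_of_ne hsu with hlt | hgt
    · have hswap : descProd T a s * (T k + 1) = (T k + 1) * descProd T a s := by
        rw [mul_add, add_mul, mul_one, one_mul, hT.T_mul_descProd_of_lt (by omega) (by omega)]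
      rw [hswap, ← mul_assoc, hy k hk1 (by omega), zero_mul, smul_zero]
    · have hswap : descProd T a s * (T k + 1) = (T (k - 1) + 1) * descProd T a s := by
        rw [mul_add, add_mul, mul_one, one_mul,
          hT.descProd_mul_T_of_ge (by omega) (by omega) (by omega) (by omega) (by omega)]
      rw [hswap, ← mul_assoc, hy (k - 1) (by omega) (by omega), zero_mul, smul_zero]

lemma antisym_mul_T_add_one (hv : v ≠ 0) {o m : ℕ} (hom : o + m ≤ r) {k : ℕ} (hk1 : o ≤ k)
    (hk2 : k + 2 ≤ o + m) : antisym v T o m * (T k + 1) = 0 := by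
  induction m generalizing k with
  | zero => omega
  | succ m ih =>
    exact hT.mul_cosetSum_mul_T_add_one hv (by omega)
      (fun k' hk1' hk2' => ih (by omega) hk1' hk2') hk1 (by omega)

lemma antisym_mul_T (hv : v ≠ 0) {o m : ℕ} (hom : o + m ≤ r) {k : ℕ} (hk1 : o ≤ k)
    (hk2 : k + 2 ≤ o + m) : antisym v T o m * T k = -antisym v T o m := by
  have h := hT.antisym_mul_T_add_one hv hom hk1 hk2
  rwa [mul_add, mul_one, add_eq_zero_iff_eq_neg] at h

end IsHeckeFamily

lemma antisym_mem {v : ℂ} {T : ℕ → H} {S : Subalgebra ℂ H} {o m : ℕ}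
    (hS : ∀ k, o ≤ k → k + 2 ≤ o + m → T k ∈ S) : antisym v T o m ∈ S := by
  have hdesc : ∀ {a s : ℕ}, (∀ i < s, T (a - i) ∈ S) → descProd T a s ∈ S := by
    intro a s h
    induction s with
    | zero => exact one_mem S
    | succ s ih => exact mul_mem (ih fun i hi => h i (by omega)) (h s (by omega))
  induction m with
  | zero => exact one_mem S
  | succ m ih =>
    refine mul_mem (ih fun k hk1 hk2 => hS k hk1 (by omega)) (Subalgebra.sum_mem _ fun s hs => ?_)
    rw [Finset.mem_range] at hs
    exact Subalgebra.smul_mem _ (hdesc fun i hi => hS _ (by omega) (by omega)) _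

end HeckeAlgebra

def qFactorial (q : ℂ) (m : ℕ) : ℂ :=
  ∏ t ∈ Finset.range m, ∑ s ∈ Finset.range (t + 1), q ^ s

lemma qFactorial_zero (q : ℂ) : qFactorial q 0 = 1 := Finset.prod_range_zero _

lemma qFactorial_succ (q : ℂ) (m : ℕ) :
    qFactorial q (m + 1) = qFactorial q m * ∑ s ∈ Finset.range (m + 1), q ^ s :=
  Finset.prod_range_succ _ _

lemma qFactorial_ne_zero {q : ℂ} (hq : ∀ k : ℕ, 0 < k → q ^ k ≠ 1) (m : ℕ) :
    qFactorial q m ≠ 0 := by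
  refine Finset.prod_ne_zero_iff.mpr fun t _ hsum => hq (t + 1) (by omega) ?_
  rw [← sub_eq_zero, ← geom_sum_mul, hsum, zero_mul]

lemma qFactorial_inv_sq_ne_zero {v : ℂ} (hroot : ∀ k : ℕ, 0 < k → v ^ k ≠ 1) (m : ℕ) :
    qFactorial (v ^ 2)⁻¹ m ≠ 0 :=
  qFactorial_ne_zero (fun k hk h1 => hroot (2 * k) (by omega)
    (by rwa [inv_pow, inv_eq_one, ← pow_mul] at h1)) m

lemma inv_add_self_ne_zero {v : ℂ} (hv : v ≠ 0) (hv4 : v ^ 4 ≠ 1) : v⁻¹ + v ≠ 0 := by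
  intro h
  have hsq : v ^ 2 = -1 := by
    field_simp at h
    linear_combination h
  exact hv4 (by rw [show v ^ 4 = (v ^ 2) ^ 2 by ring, hsq]; norm_num)

section RightAction

variable {H : Type} [Ring H] [Algebra ℂ H] {V : Type*} [AddCommGroup V] [Module ℂ V]

structure IsRightAction (act : V → H → V) : Prop where
  add_left : ∀ w w' h, act (w + w') h = act w h + act w' h
  smul_left : ∀ (c : ℂ) w h, act (c • w) h = c • act w h
  add_right : ∀ w h h', act w (h + h') = act w h + act w h'
  smul_right : ∀ w (c : ℂ) h, act w (c • h) = c • act w h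
  one_right : ∀ w, act w 1 = w
  mul_right : ∀ w h h', act w (h * h') = act (act w h) h'

/-- `V · J` in the paper's notation. -/
def actSpan (act : V → H → V) (J : Set H) : Submodule ℂ V :=
  Submodule.span ℂ {x | ∃ (w : V) (h : H), h ∈ J ∧ x = act w h}

namespace IsRightAction

variable {act : V → H → V} (hact : IsRightAction act)

def linearMap (h : H) : V →ₗ[ℂ] V where
  toFun x := act x h
  map_add' x y := hact.add_left x y h
  map_smul' c x := hact.smul_left c x h

def orbitMap (x : V) : H →ₗ[ℂ] V where
  toFun h := act x h
  map_add' := hact.add_right x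
  map_smul' c h := hact.smul_right x c h

include hact

lemma act_sum {ι : Type*} (s : Finset ι) (f : ι → H) (x : V) :
    act x (∑ i ∈ s, f i) = ∑ i ∈ s, act x (f i) :=
  map_sum (hact.orbitMap x) f s

lemma act_algebraMap (x : V) (c : ℂ) : act x (algebraMap ℂ H c) = c • x := by
  rw [Algebra.algebraMap_eq_smul_one, hact.smul_right, hact.one_right]

lemma act_noncommProd {ι : Type*} (s : Finset ι) (φ : ι → H) (comm) {x : V} {c : ι → ℂ}
    (hx : ∀ j ∈ s, act x (φ j) = c j • x) :
    act x (s.noncommProd φ comm) = (∏ j ∈ s, c j) • x := by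
  induction s using Finset.cons_induction with
  | empty => rw [Finset.noncommProd_empty, hact.one_right, Finset.prod_empty, one_smul]
  | cons a s ha ih =>
    rw [Finset.noncommProd_cons, hact.mul_right, hx a (Finset.mem_cons_self a s), hact.smul_left,
      ih _ fun j hj => hx j (Finset.mem_cons_of_mem hj), Finset.prod_cons, mul_smul]

lemma act_descProd {T : ℕ → H} {a s : ℕ} {x : V} (hx : ∀ i < s, act x (T (a - i)) = -x) :
    act x (descProd T a s) = (-1 : ℂ) ^ s • x := by
  induction s with
  | zero => rw [descProd, hact.one_right, pow_zero, one_smul]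
  | succ s ih =>
    rw [descProd, hact.mul_right, ih fun i hi => hx i (by omega), hact.smul_left,
      hx s (by omega), pow_succ, mul_smul, neg_one_smul ℂ x, smul_neg]

lemma act_antisym {v : ℂ} {T : ℕ → H} {o m : ℕ} {x : V}
    (hx : ∀ k, o ≤ k → k + 2 ≤ o + m → act x (T k) = -x) :
    act x (antisym v T o m) = qFactorial (v ^ 2)⁻¹ m • x := by
  induction m with
  | zero => rw [antisym, hact.one_right, qFactorial_zero, one_smul]
  | succ m ih =>
    rw [antisym, hact.mul_right, ih fun k hk1 hk2 => hx k hk1 (by omega), hact.smul_left,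
      cosetSum, hact.act_sum, qFactorial_succ, mul_smul, Finset.sum_smul]
    congr 1
    refine Finset.sum_congr rfl fun s hs => ?_
    rw [Finset.mem_range] at hs
    rw [hact.smul_right, hact.act_descProd fun i hi => hx _ (by omega) (by omega), smul_smul,
      ← mul_pow, neg_mul_neg, mul_one]

lemma act_act_antisym {v : ℂ} {T : ℕ → H} {o m : ℕ} {h : H}
    (hh : ∀ k, o ≤ k → k + 2 ≤ o + m → h * T k = -h) (w : V) :
    act (act w h) (antisym v T o m) = qFactorial (v ^ 2)⁻¹ m • act w h :=
  hact.act_antisym fun k hk1 hk2 => by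
    rw [← hact.mul_right, hh k hk1 hk2, ← neg_one_smul ℂ h, hact.smul_right, neg_one_smul]

end IsRightAction

lemma IsRightAction.act_eq_heckeOp {m n : ℕ}
    {act : ((Fin m → Fin n) → ℂ) → H → ((Fin m → Fin n) → ℂ)} (hact : IsRightAction act)
    {h : H} {v : ℂ} {a b : Fin m}
    (hbasis : ∀ c : Fin m → Fin n, act (eb c) h =
      if c a = c b then (v ^ 2 : ℂ) • eb c
      else if c a < c b then v • eb (c ∘ Equiv.swap a b)
      else v • eb (c ∘ Equiv.swap a b) + (v ^ 2 - 1 : ℂ) • eb c)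
    (x : (Fin m → Fin n) → ℂ) : act x h = heckeOp v a b x := by
  have : hact.linearMap h = heckeOp v a b := (Pi.basisFun ℂ _).ext fun c => by
    rw [Pi.basisFun_apply, ← eb_eq_single, heckeOp_eb, ← hbasis]
    rfl
  exact LinearMap.congr_fun this x

end RightAction

section BlockTensor

variable {p r n : ℕ} (μ : Fin p → ℕ) (hsum : ∑ j, μ j = r)

/-- The pure tensor `g_1 ⊗ ⋯ ⊗ g_p` under `Ω^{⊗r} = Ω^{⊗μ_1} ⊗ ⋯ ⊗ Ω^{⊗μ_p}`. -/
def blockTensor :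
    MultilinearMap ℂ (fun j : Fin p => (Fin (μ j) → Fin n) → ℂ) ((Fin r → Fin n) → ℂ) :=
  MultilinearMap.pi fun i => (MultilinearMap.mkPiAlgebra ℂ (Fin p) ℂ).compLinearMap
    fun j => LinearMap.proj (blockOf μ hsum i j)

lemma blockTensor_apply (g : ∀ j, (Fin (μ j) → Fin n) → ℂ) (i : Fin r → Fin n) :
    blockTensor μ hsum g i = ∏ j, g j (blockOf μ hsum i j) := by
  simp [blockTensor]

lemma blockTensor_update_apply [DecidableEq (Fin p)] (g : ∀ j, (Fin (μ j) → Fin n) → ℂ)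
    (j₀ : Fin p) (y : (Fin (μ j₀) → Fin n) → ℂ) (i : Fin r → Fin n) :
    blockTensor μ hsum (Function.update g j₀ y) i =
      y (blockOf μ hsum i j₀) * ∏ j ∈ Finset.univ.erase j₀, g j (blockOf μ hsum i j) := by
  rw [blockTensor_apply, ← Finset.mul_prod_erase _ _ (Finset.mem_univ j₀), Function.update_self]
  congr 1
  refine Finset.prod_congr rfl fun j hj => ?_
  rw [Function.update_of_ne (Finset.ne_of_mem_erase hj)]

lemma blockTensor_eb_blockOf (I : Fin r → Fin n) :
    blockTensor μ hsum (fun j => eb (blockOf μ hsum I j)) = eb I := by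
  funext i
  simp only [blockTensor_apply, eb_apply, Finset.prod_boole, Finset.mem_univ, true_implies]
  congr 1
  exact propext ⟨fun h => blockOf_injective μ hsum (funext h), fun h _ => h ▸ rfl⟩

/-- `W_1 ⊗ ⋯ ⊗ W_p ⊆ Ω^{⊗r}`. -/
def blockTensorSpan (W : ∀ j, Submodule ℂ ((Fin (μ j) → Fin n) → ℂ)) :
    Submodule ℂ ((Fin r → Fin n) → ℂ) :=
  Submodule.span ℂ {F | ∃ g : ∀ j, (Fin (μ j) → Fin n) → ℂ,
    (∀ j, g j ∈ W j) ∧ F = fun i => ∏ j, g j (blockOf μ hsum i j)}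

lemma heckeOp_blockTensor (v : ℂ) {j₀ : Fin p} {k : ℕ} (hk : inBlock μ j₀ k) (hkr : k + 1 < r)
    (g : ∀ j, (Fin (μ j) → Fin n) → ℂ) :
    heckeOp v ⟨k, by omega⟩ ⟨k + 1, hkr⟩ (blockTensor μ hsum g) =
      blockTensor μ hsum (Function.update g j₀ (heckeOp v
        ⟨k - off μ j₀, by obtain ⟨_, _⟩ := hk; omega⟩
        ⟨k - off μ j₀ + 1, by obtain ⟨_, _⟩ := hk; omega⟩ (g j₀))) := by
  classical
  obtain ⟨hk1, hk2⟩ := hk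
  funext i
  set P := ∏ j ∈ Finset.univ.erase j₀, g j (blockOf μ hsum i j)
  have hgi : blockTensor μ hsum g i = g j₀ (blockOf μ hsum i j₀) * P := by
    rw [← blockTensor_update_apply, Function.update_eq_self]
  have hgi_swap : blockTensor μ hsum g (i ∘ Equiv.swap ⟨k, by omega⟩ ⟨k + 1, hkr⟩) =
      g j₀ (blockOf μ hsum i j₀ ∘ Equiv.swap ⟨k - off μ j₀, by omega⟩
        ⟨k - off μ j₀ + 1, by omega⟩) * P := by
    rw [← Function.update_eq_self j₀ g, blockTensor_update_apply, Function.update_eq_self,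
      blockOf_comp_swap_self μ hsum ⟨hk1, hk2⟩ hkr]
    congr 1
    exact Finset.prod_congr rfl fun j hj => by
      rw [blockOf_comp_swap_of_ne μ hsum ⟨hk1, hk2⟩ (Finset.ne_of_mem_erase hj) hkr]
  have hpos : ∀ t (ht : t < μ j₀) (hs : off μ j₀ + t < r),
      blockOf μ hsum i j₀ ⟨t, ht⟩ = i ⟨off μ j₀ + t, hs⟩ := fun t ht hs => rfl
  rw [blockTensor_update_apply, heckeOp_apply, heckeOp_apply, hgi, hgi_swap,
    hpos _ _ (by omega), hpos _ _ (by omega)]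
  simp only [show off μ j₀ + (k - off μ j₀) = k by omega,
    show off μ j₀ + (k - off μ j₀ + 1) = k + 1 by omega]
  split_ifs <;> ring

end BlockTensor

section Composition

def blockAntisym {H : Type} [Ring H] [Algebra ℂ H] (v : ℂ) (T : ℕ → H) {p : ℕ} (μ : Fin p → ℕ)
    (j : Fin p) : H :=
  antisym v T (off μ j) (μ j)

variable {p r : ℕ} {μ : Fin p → ℕ} (hsum : ∑ j, μ j = r) {H : Type} [Ring H] [Algebra ℂ H]
  {v : ℂ} {T : ℕ → H} (hT : IsHeckeFamily v r T)

lemma blockAntisym_mem_blockAlg (j : Fin p) : blockAntisym v T μ j ∈ blockAlg μ T j :=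
  antisym_mem fun k hk1 hk2 => Algebra.subset_adjoin ⟨k, ⟨hk1, hk2⟩, rfl⟩

include hsum hT

lemma blockAntisym_mul_T (hv : v ≠ 0) {j : Fin p} {k : ℕ} (hk : inBlock μ j k) :
    blockAntisym v T μ j * T k = -blockAntisym v T μ j :=
  hT.antisym_mul_T hv (off_add_le μ hsum j) hk.1 hk.2

lemma mul_T_of_mem_bigJ (hv : v ≠ 0) {h : H} (hh : h ∈ bigJ v μ T) {j : Fin p} {k : ℕ}
    (hk : inBlock μ j k) : h * T k = -h := by
  obtain ⟨h', rfl⟩ := hh k ⟨j, hk⟩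
  rw [mul_assoc, hT.heckeC_mul_T hv (inBlock_succ_lt μ hsum hk), mul_neg]

lemma mul_T_of_mem_smallJ (hv : v ≠ 0) {j : Fin p} {h : H} (hh : h ∈ smallJ v μ T j) {k : ℕ}
    (hk : inBlock μ j k) : h * T k = -h := by
  obtain ⟨h', -, rfl⟩ := hh.2 k hk
  rw [mul_assoc, hT.heckeC_mul_T hv (inBlock_succ_lt μ hsum hk), mul_neg]

lemma blockAlg_commute {j j' : Fin p} (hne : j ≠ j') {a b : H} (ha : a ∈ blockAlg μ T j)
    (hb : b ∈ blockAlg μ T j') : Commute a b := by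
  refine Algebra.commute_of_mem_adjoin_of_forall_mem_commute hb ?_
  rintro _ ⟨k', hk', rfl⟩
  refine (Algebra.commute_of_mem_adjoin_of_forall_mem_commute ha ?_).symm
  rintro _ ⟨k, hk, rfl⟩
  rcases inBlock_separated μ hk hk' hne with h | h
  · exact (hT.comm k k' (inBlock_succ_lt μ hsum hk) (inBlock_succ_lt μ hsum hk') h).symm
  · exact hT.comm k' k (inBlock_succ_lt μ hsum hk') (inBlock_succ_lt μ hsum hk) h

lemma blockAntisym_mem_smallJ (hv : v ≠ 0) (hv4 : v ^ 4 ≠ 1) (j : Fin p) :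
    blockAntisym v T μ j ∈ smallJ v μ T j := by
  refine ⟨blockAntisym_mem_blockAlg j, fun k hk => ⟨(-(v⁻¹ + v))⁻¹ • blockAntisym v T μ j,
    Subalgebra.smul_mem _ (blockAntisym_mem_blockAlg j) _, ?_⟩⟩
  have hC : blockAntisym v T μ j * heckeC v T k = -(v⁻¹ + v) • blockAntisym v T μ j := by
    rw [heckeC, mul_sub, mul_smul_comm, blockAntisym_mul_T hsum hT hv hk, mul_smul_comm, mul_one]
    module
  rw [smul_mul_assoc, hC, smul_smul,
    inv_mul_cancel₀ (neg_ne_zero.mpr (inv_add_self_ne_zero hv hv4)), one_smul]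

lemma blockAntisym_pairwise_commute :
    ((Finset.univ : Finset (Fin p)) : Set (Fin p)).Pairwise
      fun a b => Commute (blockAntisym v T μ a) (blockAntisym v T μ b) :=
  fun a _ b _ hab => blockAlg_commute hsum hT hab (blockAntisym_mem_blockAlg a)
    (blockAntisym_mem_blockAlg b)

/-- The `q`-antisymmetrizer of the Young subgroup `𝔖_μ`. -/
def compositionAntisym : H :=
  Finset.univ.noncommProd (blockAntisym v T μ) (blockAntisym_pairwise_commute hsum hT)

lemma compositionAntisym_mem_bigJ (hv : v ≠ 0) (hv4 : v ^ 4 ≠ 1) :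
    compositionAntisym hsum hT ∈ bigJ v μ T := by
  rintro k ⟨j, hk⟩
  obtain ⟨h', -, hfac⟩ := (blockAntisym_mem_smallJ hsum hT hv hv4 j).2 k hk
  refine ⟨(Finset.univ.erase j).noncommProd (blockAntisym v T μ) ?_ * h', ?_⟩
  · exact fun a ha b hb hab => blockAntisym_pairwise_commute hsum hT (by simp) (by simp) hab
  · rw [compositionAntisym, ← Finset.noncommProd_erase_mul _ (Finset.mem_univ j), mul_assoc, ← hfac]

end Composition

section TensorAction

variable {p r n : ℕ} {μ : Fin p → ℕ} (hsum : ∑ j, μ j = r) {H : Type} [Ring H] [Algebra ℂ H]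
  {v : ℂ} {T : ℕ → H}
  {act : ((Fin r → Fin n) → ℂ) → H → ((Fin r → Fin n) → ℂ)} (hact : IsRightAction act)
  {actB : ∀ j : Fin p, ((Fin (μ j) → Fin n) → ℂ) → H → ((Fin (μ j) → Fin n) → ℂ)}
  (hactB : ∀ j, IsRightAction (actB j))
  (hglob : ∀ k (hk : k + 1 < r) x, act x (T k) = heckeOp v ⟨k, by omega⟩ ⟨k + 1, hk⟩ x)
  (hloc : ∀ j k (hk1 : off μ j ≤ k) (hk2 : k + 2 ≤ off μ j + μ j) y,
    actB j y (T k) = heckeOp v ⟨k - off μ j, by omega⟩ ⟨k - off μ j + 1, by omega⟩ y)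

include hact hactB hglob hloc in
lemma act_blockTensor_of_mem_blockAlg {j₀ : Fin p} {h : H} (hh : h ∈ blockAlg μ T j₀)
    (g : ∀ j, (Fin (μ j) → Fin n) → ℂ) :
    act (blockTensor μ hsum g) h =
      blockTensor μ hsum (Function.update g j₀ (actB j₀ (g j₀) h)) := by
  induction hh using Algebra.adjoin_induction generalizing g with
  | mem x hx =>
    obtain ⟨k, hk, rfl⟩ := hx
    have hkr := inBlock_succ_lt μ hsum hk
    obtain ⟨hk1, hk2⟩ := hk
    rw [hglob k hkr, hloc j₀ k hk1 hk2]
    exact heckeOp_blockTensor μ hsum v ⟨hk1, hk2⟩ hkr g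
  | algebraMap c =>
    rw [hact.act_algebraMap, (hactB j₀).act_algebraMap, MultilinearMap.map_update_smul,
      Function.update_eq_self]
  | add x y _ _ ihx ihy =>
    rw [hact.add_right, ihx, ihy, (hactB j₀).add_right, MultilinearMap.map_update_add]
  | mul x y _ _ ihx ihy =>
    rw [hact.mul_right, ihx, ihy, Function.update_self, Function.update_idem,
      (hactB j₀).mul_right]

include hact hactB hglob hloc in
lemma act_blockTensor_noncommProd {φ : Fin p → H} (hφ : ∀ j, φ j ∈ blockAlg μ T j)
    (s : Finset (Fin p)) (comm : (s : Set (Fin p)).Pairwise fun a b => Commute (φ a) (φ b))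
    (g : ∀ j, (Fin (μ j) → Fin n) → ℂ) :
    act (blockTensor μ hsum g) (s.noncommProd φ comm) =
      blockTensor μ hsum (fun j => if j ∈ s then actB j (g j) (φ j) else g j) := by
  induction s using Finset.cons_induction generalizing g with
  | empty => simp [hact.one_right]
  | cons a s ha ih =>
    rw [Finset.noncommProd_cons, hact.mul_right,
      act_blockTensor_of_mem_blockAlg hsum hact hactB hglob hloc (hφ a), ih]
    congr 1
    funext j
    by_cases hja : j = a
    · subst hja
      simp [ha]
    · simp [hja]

variable (hT : IsHeckeFamily v r T) (hv : v ≠ 0)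

include hsum hact hT hv in
lemma act_act_compositionAntisym {h : H} (hh : h ∈ bigJ v μ T) (w : (Fin r → Fin n) → ℂ) :
    act (act w h) (compositionAntisym hsum hT) =
      (∏ j, qFactorial (v ^ 2)⁻¹ (μ j)) • act w h :=
  hact.act_noncommProd _ _ _ fun _ _ =>
    hact.act_act_antisym (fun _ hk1 hk2 => mul_T_of_mem_bigJ hsum hT hv hh ⟨hk1, hk2⟩) w

include hsum hactB hT hv in
lemma actB_blockAntisym_of_mem_actSpan {j : Fin p} {y : (Fin (μ j) → Fin n) → ℂ}
    (hy : y ∈ actSpan (actB j) (smallJ v μ T j)) :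
    actB j y (blockAntisym v T μ j) = qFactorial (v ^ 2)⁻¹ (μ j) • y := by
  have hle : actSpan (actB j) (smallJ v μ T j) ≤ Module.End.eigenspace
      ((hactB j).linearMap (blockAntisym v T μ j)) (qFactorial (v ^ 2)⁻¹ (μ j)) := by
    refine Submodule.span_le.mpr ?_
    rintro _ ⟨w, h, hh, rfl⟩
    exact Module.End.mem_eigenspace_iff.mpr <| (hactB j).act_act_antisym
      (fun _ hk1 hk2 => mul_T_of_mem_smallJ hsum hT hv hh ⟨hk1, hk2⟩) w
  exact Module.End.mem_eigenspace_iff.mp (hle hy)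

include hsum hact hactB hglob hloc hT hv in
lemma act_blockTensor_compositionAntisym {g : ∀ j, (Fin (μ j) → Fin n) → ℂ}
    (hg : ∀ j, g j ∈ actSpan (actB j) (smallJ v μ T j)) :
    act (blockTensor μ hsum g) (compositionAntisym hsum hT) =
      (∏ j, qFactorial (v ^ 2)⁻¹ (μ j)) • blockTensor μ hsum g := by
  rw [compositionAntisym, act_blockTensor_noncommProd hsum hact hactB hglob hloc
    blockAntisym_mem_blockAlg]
  simp only [Finset.mem_univ, if_true, actB_blockAntisym_of_mem_actSpan hsum hactB hT hv (hg _)]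
  exact MultilinearMap.map_smul_univ _ _ _

include hsum hact hactB hglob hloc hT hv in
lemma act_compositionAntisym_mem (hv4 : v ^ 4 ≠ 1) (x : (Fin r → Fin n) → ℂ) :
    act x (compositionAntisym hsum hT) ∈
      blockTensorSpan μ hsum fun j => actSpan (actB j) (smallJ v μ T j) := by
  have hle : (⊤ : Submodule ℂ ((Fin r → Fin n) → ℂ)) ≤
      (blockTensorSpan μ hsum fun j => actSpan (actB j) (smallJ v μ T j)).comap
        (hact.linearMap (compositionAntisym hsum hT)) := by
    rw [← (Pi.basisFun ℂ _).span_eq, Submodule.span_le]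
    rintro _ ⟨I, rfl⟩
    rw [SetLike.mem_coe, Submodule.mem_comap, Pi.basisFun_apply, ← eb_eq_single,
      ← blockTensor_eb_blockOf μ hsum I]
    show act _ (compositionAntisym hsum hT) ∈ _
    rw [compositionAntisym, act_blockTensor_noncommProd hsum hact hactB hglob hloc
      blockAntisym_mem_blockAlg]
    refine Submodule.subset_span
      ⟨fun j => actB j (eb (blockOf μ hsum I j)) (blockAntisym v T μ j), fun j =>
        Submodule.subset_span ⟨eb (blockOf μ hsum I j), _,
          blockAntisym_mem_smallJ hsum hT hv hv4 j, rfl⟩, ?_⟩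
    funext i
    simp only [blockTensor_apply, Finset.mem_univ, if_true]
  exact hle Submodule.mem_top

include hsum hact hactB hglob hloc hT hv in
theorem actSpan_bigJ_eq_blockTensorSpan (hroot : ∀ k : ℕ, 0 < k → v ^ k ≠ 1) :
    actSpan act (bigJ v μ T) =
      blockTensorSpan μ hsum fun j => actSpan (actB j) (smallJ v μ T j) := by
  have hv4 : v ^ 4 ≠ 1 := hroot 4 (by norm_num)
  have hC : ∏ j, qFactorial (v ^ 2)⁻¹ (μ j) ≠ 0 :=
    Finset.prod_ne_zero_iff.mpr fun j _ => qFactorial_inv_sq_ne_zero hroot (μ j)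
  apply le_antisymm <;> refine Submodule.span_le.mpr ?_
  · rintro _ ⟨w, h, hh, rfl⟩
    rw [SetLike.mem_coe, ← inv_smul_smul₀ hC (act w h),
      ← act_act_compositionAntisym hsum hact hT hv hh]
    exact Submodule.smul_mem _ _
      (act_compositionAntisym_mem hsum hact hactB hglob hloc hT hv hv4 _)
  · rintro _ ⟨g, hg, rfl⟩
    refine Submodule.subset_span ⟨(∏ j, qFactorial (v ^ 2)⁻¹ (μ j))⁻¹ • blockTensor μ hsum g,
      compositionAntisym hsum hT, compositionAntisym_mem_bigJ hsum hT hv hv4, ?_⟩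
    rw [hact.smul_left, act_blockTensor_compositionAntisym hsum hact hactB hglob hloc hT hv hg,
      inv_smul_smul₀ hC]
    funext i
    exact (blockTensor_apply μ hsum g i).symm

end TensorAction

end HeckeTensorBlocks

theorem statement7
    (v : ℂ) (hv : v ≠ 0) (hroot : ∀ k : ℕ, 0 < k → v ^ k ≠ 1)
    (n r p : ℕ)
    (μ : Fin p → ℕ) (hsum : ∑ j, μ j = r)
    -- `H` is the Hecke algebra `ℋ(r)_ℂ`, presented by generators `T k = T_{k+1}` (`k+1 < r`):
    (H : Type) [Ring H] [Algebra ℂ H] (T : ℕ → H)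
    (hquad : ∀ k : ℕ, k + 1 < r → (T k + 1) * (T k - algebraMap ℂ H (v ^ 2)) = 0)
    (hbraid : ∀ k : ℕ, k + 2 < r → T k * T (k + 1) * T k = T (k + 1) * T k * T (k + 1))
    (hcomm : ∀ k l : ℕ, k + 1 < r → l + 1 < r → k + 1 < l → T k * T l = T l * T k)
    -- the right `H`-module structure on the tensor space `Ω_{n,ℂ}^{⊗r}`:
    (act : ((Fin r → Fin n) → ℂ) → H → ((Fin r → Fin n) → ℂ))
    (hact_addw : ∀ w w' h, act (w + w') h = act w h + act w' h)
    (hact_smulw : ∀ (c : ℂ) w h, act (c • w) h = c • act w h)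
    (hact_addh : ∀ w h h', act w (h + h') = act w h + act w h')
    (hact_smulh : ∀ w (c : ℂ) h, act w (c • h) = c • act w h)
    (hact_one : ∀ w, act w 1 = w)
    (hact_mul : ∀ w h h', act w (h * h') = act (act w h) h')
    (hact_basis : ∀ (i : Fin r → Fin n) (k : ℕ) (hk : k + 1 < r),
      act (eb i) (T k) =
        if i ⟨k, by omega⟩ = i ⟨k + 1, hk⟩ then (v ^ 2 : ℂ) • eb i
        else if i ⟨k, by omega⟩ < i ⟨k + 1, hk⟩ then
          v • eb (i ∘ Equiv.swap ⟨k, by omega⟩ ⟨k + 1, hk⟩)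
        else
          v • eb (i ∘ Equiv.swap ⟨k, by omega⟩ ⟨k + 1, hk⟩) + (v ^ 2 - 1 : ℂ) • eb i)
    -- the right action of `ℋ_{μ,j} ⊆ H` on the `j`-th tensor factor `Ω_{n,ℂ}^{⊗μ_j}`,
    -- given by the same formulas (in local positions):
    (actB : ∀ j : Fin p, ((Fin (μ j) → Fin n) → ℂ) → H → ((Fin (μ j) → Fin n) → ℂ))
    (hactB_addw : ∀ j w w' h, actB j (w + w') h = actB j w h + actB j w' h)
    (hactB_smulw : ∀ j (c : ℂ) w h, actB j (c • w) h = c • actB j w h)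
    (hactB_addh : ∀ j w h h', actB j w (h + h') = actB j w h + actB j w h')
    (hactB_smulh : ∀ j w (c : ℂ) h, actB j w (c • h) = c • actB j w h)
    (hactB_one : ∀ j w, actB j w 1 = w)
    (hactB_mul : ∀ j w h h', actB j w (h * h') = actB j (actB j w h) h')
    (hactB_basis : ∀ (j : Fin p) (b : Fin (μ j) → Fin n) (k : ℕ)
        (hk1 : off μ j ≤ k) (hk2 : k + 2 ≤ off μ j + μ j),
      actB j (eb b) (T k) =
        if b ⟨k - off μ j, by omega⟩ = b ⟨k - off μ j + 1, by omega⟩ then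
          (v ^ 2 : ℂ) • eb b
        else if b ⟨k - off μ j, by omega⟩ < b ⟨k - off μ j + 1, by omega⟩ then
          v • eb (b ∘ Equiv.swap ⟨k - off μ j, by omega⟩ ⟨k - off μ j + 1, by omega⟩)
        else
          v • eb (b ∘ Equiv.swap ⟨k - off μ j, by omega⟩ ⟨k - off μ j + 1, by omega⟩) +
            (v ^ 2 - 1 : ℂ) • eb b) :
    -- conclusion: `Ω^{⊗r}·𝒥_μ = (Ω^{⊗μ_1}·𝒥_{μ,1}) ⊗ ⋯ ⊗ (Ω^{⊗μ_p}·𝒥_{μ,p})`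
    Submodule.span ℂ
        {x : (Fin r → Fin n) → ℂ | ∃ (w : (Fin r → Fin n) → ℂ) (h : H),
          h ∈ bigJ v μ T ∧ x = act w h}
      = Submodule.span ℂ
        {F : (Fin r → Fin n) → ℂ | ∃ g : (j : Fin p) → ((Fin (μ j) → Fin n) → ℂ),
          (∀ j : Fin p, g j ∈ Submodule.span ℂ
            {y : (Fin (μ j) → Fin n) → ℂ | ∃ (w : (Fin (μ j) → Fin n) → ℂ) (h : H),
              h ∈ smallJ v μ T j ∧ y = actB j w h}) ∧
          F = fun i => ∏ j : Fin p, g j (blockOf μ hsum i j)} := by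
  have hact : HeckeTensorBlocks.IsRightAction act :=
    ⟨hact_addw, hact_smulw, hact_addh, hact_smulh, hact_one, hact_mul⟩
  have hactB : ∀ j, HeckeTensorBlocks.IsRightAction (actB j) := fun j =>
    ⟨hactB_addw j, hactB_smulw j, hactB_addh j, hactB_smulh j, hactB_one j, hactB_mul j⟩
  exact HeckeTensorBlocks.actSpan_bigJ_eq_blockTensorSpan hsum hact hactB
    (fun k hk => hact.act_eq_heckeOp (hact_basis · k hk))
    (fun j k hk1 hk2 => (hactB j).act_eq_heckeOp (hactB_basis j · k hk1 hk2))
    ⟨hquad, hbraid, hcomm⟩ hv hroot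

end
end
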